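/- For every θ ∈ (0,1) there is a constant C > 0 such that for all ε ∈ (0,1], all real N ≥ 1 with 2εN ≤ ε^θ, all t ≥ 0 and all z ∈ ℝ², | ∑_{n ∈ ℤ², ⟨n⟩ ≤ N} ( ε^{−4} ∫₀ᵗ e^{−s/ε²} · s² · φ( s²·λ_ε(⟨n⟩)² )² ds − ∫₀ᵗ e^{−2s⟨n⟩²} ds ) · e^{i n·z} | ≤ C·ε^{2θ}, where λ_ε(r) = √(1−4ε²r²)/(2ε²) and φ(x) = ∑_{j=0}^∞ x^j/(2j+1)!. -/

import Mathlib

/-!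
With `σ = √(1 - 4ε²r²) = 2ε² λ_ε(r)` one has `s φ(s²λ²) = sinh(sλ)/λ` and `4λ²ε⁴ = σ²`, so the
damped-wave variance of a mode is `(G((1 - σ)/ε²) + G((1 + σ)/ε²) - 2 G(1/ε²))/σ²`, where
`G(c) = ∫₀ᵗ e^{-cs} ds ∈ [0, 1/c]`. The heat variance is `G(2r²)`. Since
`(1 - σ)/ε² = 4r²/(1 + σ) ≥ 2r²` and `1/(2r²) - ε²/(1 - σ) = (1 - σ)/(4r²) ≤ ε²`, the slow term is
within `ε²` of `G(2r²)`, and all other terms are `O(ε²)`: each mode is off by at most `3ε²/σ²`.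
Under `2εN ≤ ε^θ`, every mode with `⟨n⟩ ≤ N` has `1 - σ² ≤ ε^{2θ} ≤ 2^{-2θ/(1-θ)} < 1`, and there
are at most `9N²` such modes, so the total error is `O(ε²N²) = O(ε^{2θ})`.
-/

/-- The entire function `φ(x) = ∑_{j=0}^∞ x^j/(2j+1)!`. -/
noncomputable def phi (x : ℝ) : ℝ := ∑' j : ℕ, x ^ j / (Nat.factorial (2 * j + 1) : ℝ)

/-- The low-frequency damped-wave rate `λ_ε(r) = √(1−4ε²r²)/(2ε²)`. -/
noncomputable def lam (ε r : ℝ) : ℝ := Real.sqrt (1 - 4 * ε ^ 2 * r ^ 2) / (2 * ε ^ 2)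

/-- The Japanese bracket `⟨n⟩ = (1+|n|²)^{1/2}` of a lattice point `n ∈ ℤ²`. -/
noncomputable def jb (n : ℤ × ℤ) : ℝ :=
  Real.sqrt (1 + ((n.1 : ℝ) ^ 2 + (n.2 : ℝ) ^ 2))

/-- The pairing `n·z` of a lattice point with `z ∈ ℝ²`. -/
def dotZ (n : ℤ × ℤ) (z : ℝ × ℝ) : ℝ := (n.1 : ℝ) * z.1 + (n.2 : ℝ) * z.2

open Real

lemma mul_phi_sq (x : ℝ) : x * phi (x ^ 2) = sinh x := by
  rw [phi, sinh_eq_tsum, ← tsum_mul_left]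
  refine tsum_congr fun j => ?_
  rw [← pow_mul, pow_succ]
  ring

lemma sq_mul_phi_sq_mul_sq (s l : ℝ) (hl : l ≠ 0) :
    s ^ 2 * phi (s ^ 2 * l ^ 2) ^ 2 = sinh (s * l) ^ 2 / l ^ 2 := by
  rw [← mul_phi_sq, mul_pow s l]
  field_simp

lemma exp_neg_mul_mul_sinh_sq (a l s : ℝ) :
    exp (-(2 * a * s)) * sinh (l * s) ^ 2 =
      (exp (-(2 * (a - l) * s)) + exp (-(2 * (a + l) * s)) - 2 * exp (-(2 * a * s))) / 4 := by
  have h₁ : exp (-(2 * (a - l) * s)) = exp (-(2 * a * s)) * exp (l * s) ^ 2 := by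
    rw [← exp_nat_mul, ← exp_add]; ring_nf
  have h₂ : exp (-(2 * (a + l) * s)) = exp (-(2 * a * s)) * exp (-(l * s)) ^ 2 := by
    rw [← exp_nat_mul, ← exp_add]; ring_nf
  have h₃ : exp (l * s) * exp (-(l * s)) = 1 := by rw [← exp_add, add_neg_cancel, exp_zero]
  rw [sinh_eq, h₁, h₂]
  linear_combination (-exp (-(2 * a * s)) / 2) * h₃

lemma integral_exp_neg_mul {c : ℝ} (hc : c ≠ 0) (t : ℝ) :
    ∫ s in (0 : ℝ)..t, exp (-(c * s)) = (1 - exp (-(c * t))) / c := by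
  rw [intervalIntegral.integral_comp_mul_left (fun x => exp (-x)) hc,
    intervalIntegral.integral_comp_neg, integral_exp]
  simp [div_eq_inv_mul]

lemma intervalIntegrable_exp_neg_mul (c a b : ℝ) :
    IntervalIntegrable (fun s => exp (-(c * s))) MeasureTheory.volume a b := by
  apply Continuous.intervalIntegrable; fun_prop

section ExpDecay

variable {t : ℝ}

lemma integral_exp_neg_mul_nonneg (c : ℝ) (ht : 0 ≤ t) :
    0 ≤ ∫ s in (0 : ℝ)..t, exp (-(c * s)) :=
  intervalIntegral.integral_nonneg ht fun _ _ => (exp_pos _).le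

lemma integral_exp_neg_mul_le_inv {c : ℝ} (hc : 0 < c) :
    ∫ s in (0 : ℝ)..t, exp (-(c * s)) ≤ 1 / c := by
  rw [integral_exp_neg_mul hc.ne']
  gcongr
  linarith [exp_pos (-(c * t))]

lemma integral_exp_neg_mul_le_of_le {b c : ℝ} (hbc : b ≤ c) (ht : 0 ≤ t) :
    ∫ s in (0 : ℝ)..t, exp (-(c * s)) ≤ ∫ s in (0 : ℝ)..t, exp (-(b * s)) := by
  refine intervalIntegral.integral_mono_on ht (intervalIntegrable_exp_neg_mul _ _ _)
    (intervalIntegrable_exp_neg_mul _ _ _) fun s hs => ?_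
  gcongr
  exact hs.1

lemma integral_exp_neg_mul_sub_le {b c : ℝ} (hb : 0 < b) (hbc : b ≤ c) (ht : 0 ≤ t) :
    (∫ s in (0 : ℝ)..t, exp (-(b * s))) - ∫ s in (0 : ℝ)..t, exp (-(c * s)) ≤ 1 / b - 1 / c := by
  have hc : 0 < c := hb.trans_le hbc
  rw [integral_exp_neg_mul hb.ne', integral_exp_neg_mul hc.ne']
  have hexp : exp (-(c * t)) ≤ exp (-(b * t)) := by gcongr
  have : exp (-(c * t)) / c ≤ exp (-(b * t)) / b := by gcongr
  linarith [this, show (1 - exp (-(b * t))) / b = 1 / b - exp (-(b * t)) / b by ring,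
    show (1 - exp (-(c * t))) / c = 1 / c - exp (-(c * t)) / c by ring]

end ExpDecay

lemma integral_exp_neg_mul_mul_sq_phi (a l t : ℝ) (hl : l ≠ 0) :
    ∫ s in (0 : ℝ)..t, exp (-(2 * a * s)) * s ^ 2 * phi (s ^ 2 * l ^ 2) ^ 2 =
      ((∫ s in (0 : ℝ)..t, exp (-(2 * (a - l) * s)))
          + (∫ s in (0 : ℝ)..t, exp (-(2 * (a + l) * s)))
        - 2 * ∫ s in (0 : ℝ)..t, exp (-(2 * a * s))) / (4 * l ^ 2) := by
  have hpt : ∀ s, exp (-(2 * a * s)) * s ^ 2 * phi (s ^ 2 * l ^ 2) ^ 2 =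
      (exp (-(2 * (a - l) * s)) + exp (-(2 * (a + l) * s)) - 2 * exp (-(2 * a * s))) /
        (4 * l ^ 2) := by
    intro s
    rw [mul_assoc, sq_mul_phi_sq_mul_sq s l hl, mul_comm s l, ← mul_div_assoc,
      exp_neg_mul_mul_sinh_sq, div_div, mul_comm (4 : ℝ)]
  simp only [hpt, intervalIntegral.integral_div]
  have hint (c : ℝ) := intervalIntegrable_exp_neg_mul c 0 t
  rw [intervalIntegral.integral_sub ((hint _).add (hint _)) ((hint _).const_mul 2),
    intervalIntegral.integral_add (hint _) (hint _), intervalIntegral.integral_const_mul]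

lemma abs_dampedWave_modes_sub_heat_le {ε r σ t : ℝ} (hε : 0 < ε) (hr : 0 < r) (hσ : 0 < σ)
    (hσr : σ ^ 2 = 1 - 4 * ε ^ 2 * r ^ 2) (ht : 0 ≤ t) :
    |((∫ s in (0 : ℝ)..t, exp (-((1 - σ) / ε ^ 2 * s)))
          + (∫ s in (0 : ℝ)..t, exp (-((1 + σ) / ε ^ 2 * s)))
        - 2 * ∫ s in (0 : ℝ)..t, exp (-(1 / ε ^ 2 * s))) / σ ^ 2
      - ∫ s in (0 : ℝ)..t, exp (-(2 * r ^ 2 * s))| ≤ 3 * ε ^ 2 / σ ^ 2 := by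
  have hσ1 : σ < 1 := by nlinarith [pow_pos hε 2, pow_pos hr 2]
  have hε2 : 0 < ε ^ 2 := by positivity
  have hr2 : 0 < r ^ 2 := by positivity
  have hslow : (1 - σ) / ε ^ 2 = 4 * r ^ 2 / (1 + σ) := by
    field_simp; nlinarith
  have hslow_ge : 2 * r ^ 2 ≤ (1 - σ) / ε ^ 2 := by
    rw [hslow, le_div_iff₀ (by linarith)]; nlinarith
  set H := ∫ s in (0 : ℝ)..t, exp (-(2 * r ^ 2 * s))
  set G₁ := ∫ s in (0 : ℝ)..t, exp (-((1 - σ) / ε ^ 2 * s))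
  set G₂ := ∫ s in (0 : ℝ)..t, exp (-((1 + σ) / ε ^ 2 * s))
  set G₃ := ∫ s in (0 : ℝ)..t, exp (-(1 / ε ^ 2 * s))
  have hG₁_le : G₁ ≤ H := integral_exp_neg_mul_le_of_le hslow_ge ht
  have hG₁_ge : H - G₁ ≤ ε ^ 2 := by
    refine (integral_exp_neg_mul_sub_le (by positivity) hslow_ge ht).trans ?_
    rw [hslow, one_div_div, div_sub_div _ _ (by positivity) (by positivity)]
    have h1σ : 1 - σ ≤ 4 * ε ^ 2 * r ^ 2 := by nlinarith
    rw [div_le_iff₀ (by positivity)]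
    nlinarith [mul_le_mul_of_nonneg_left h1σ hr2.le]
  have hH : (1 - σ ^ 2) * H ≤ 2 * ε ^ 2 := by
    have := integral_exp_neg_mul_le_inv (t := t) (by positivity : 0 < 2 * r ^ 2)
    rw [hσr]
    calc (1 - (1 - 4 * ε ^ 2 * r ^ 2)) * H ≤ 4 * ε ^ 2 * r ^ 2 * (1 / (2 * r ^ 2)) := by
          rw [sub_sub_cancel]; gcongr
      _ = 2 * ε ^ 2 := by field_simp; ring
  have hG₂ : G₂ ≤ ε ^ 2 := by
    refine (integral_exp_neg_mul_le_inv (by positivity)).trans ?_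
    rw [one_div_div, div_le_iff₀ (by positivity)]; nlinarith
  have hG₃ : G₃ ≤ ε ^ 2 := by
    refine (integral_exp_neg_mul_le_inv (by positivity)).trans ?_
    rw [one_div_div, div_one]
  have hH0 := integral_exp_neg_mul_nonneg (2 * r ^ 2) ht
  have hG₂0 := integral_exp_neg_mul_nonneg ((1 + σ) / ε ^ 2) ht
  have hG₃0 := integral_exp_neg_mul_nonneg (1 / ε ^ 2) ht
  have hσ1' : 0 ≤ 1 - σ ^ 2 := by nlinarith
  -- the numerator is `(G₁ - H) + (1 - σ²) H + G₂ - 2 G₃`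
  rw [div_sub' (pow_pos hσ 2).ne', abs_div, abs_of_pos (pow_pos hσ 2)]
  rw [div_le_div_iff_of_pos_right (by positivity), abs_le]
  constructor <;> nlinarith

lemma abs_dampedWave_sub_heat_le {ε r t : ℝ} (hε : 0 < ε) (hr : 0 < r) (ht : 0 ≤ t)
    (h : 4 * ε ^ 2 * r ^ 2 < 1) :
    |(∫ s in (0 : ℝ)..t, exp (-s / ε ^ 2) * s ^ 2 * phi (s ^ 2 * lam ε r ^ 2) ^ 2) / ε ^ 4
      - ∫ s in (0 : ℝ)..t, exp (-2 * s * r ^ 2)| ≤ 3 * ε ^ 2 / (1 - 4 * ε ^ 2 * r ^ 2) := by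
  set σ := √(1 - 4 * ε ^ 2 * r ^ 2)
  have hσ : 0 < σ := Real.sqrt_pos.mpr (by linarith)
  have hσ2 : σ ^ 2 = 1 - 4 * ε ^ 2 * r ^ 2 := Real.sq_sqrt (by linarith)
  have hε2 : ε ^ 2 ≠ 0 := by positivity
  have hlam : lam ε r = σ / (2 * ε ^ 2) := rfl
  have hdamp (s : ℝ) : -s / ε ^ 2 = -(2 * (1 / (2 * ε ^ 2)) * s) := by field_simp
  have hheat (s : ℝ) : -2 * s * r ^ 2 = -(2 * r ^ 2 * s) := by ring
  have hslow : 2 * (1 / (2 * ε ^ 2) - σ / (2 * ε ^ 2)) = (1 - σ) / ε ^ 2 := by field_simp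
  have hfast : 2 * (1 / (2 * ε ^ 2) + σ / (2 * ε ^ 2)) = (1 + σ) / ε ^ 2 := by field_simp
  have hmean : 2 * (1 / (2 * ε ^ 2)) = 1 / ε ^ 2 := by field_simp
  have hnorm : 4 * (σ / (2 * ε ^ 2)) ^ 2 * ε ^ 4 = σ ^ 2 := by field_simp; ring
  simp_rw [hdamp, hheat, hlam]
  rw [integral_exp_neg_mul_mul_sq_phi _ _ _ (by positivity), hslow, hfast, hmean, div_div, hnorm,
    ← hσ2]
  exact abs_dampedWave_modes_sub_heat_le hε hr hσ hσ2 ht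

lemma one_le_jb (n : ℤ × ℤ) : 1 ≤ jb n :=
  Real.one_le_sqrt.mpr (by nlinarith [sq_nonneg (n.1 : ℝ), sq_nonneg (n.2 : ℝ)])

noncomputable def box (M : ℤ) : Finset (ℤ × ℤ) := Finset.Icc (-M) M ×ˢ Finset.Icc (-M) M

lemma mem_box_floor_of_jb_le {n : ℤ × ℤ} {N : ℝ} (h : jb n ≤ N) : n ∈ box ⌊N⌋ := by
  have hcoord {x : ℤ} (hx : (x : ℝ) ^ 2 ≤ 1 + ((n.1 : ℝ) ^ 2 + (n.2 : ℝ) ^ 2)) :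
      x ∈ Finset.Icc (-⌊N⌋) ⌊N⌋ := by
    obtain ⟨hlo, hhi⟩ := abs_le.mp ((Real.abs_le_sqrt hx).trans h)
    rw [Finset.mem_Icc, neg_le, Int.le_floor, Int.le_floor]
    exact ⟨by push_cast; linarith, hhi⟩
  exact Finset.mem_product.mpr
    ⟨hcoord (by nlinarith [sq_nonneg (n.2 : ℝ)]), hcoord (by nlinarith [sq_nonneg (n.1 : ℝ)])⟩

lemma card_box_floor_le {N : ℝ} (hN : 1 ≤ N) : ((box ⌊N⌋).card : ℝ) ≤ 9 * N ^ 2 := by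
  have hfloor : (0 : ℤ) ≤ ⌊N⌋ := Int.floor_nonneg.mpr (by linarith)
  have hcard : ((Finset.Icc (-⌊N⌋) ⌊N⌋).card : ℤ) = 2 * ⌊N⌋ + 1 := by
    rw [Int.card_Icc_of_le _ _ (by omega)]; ring
  have hcardR : ((Finset.Icc (-⌊N⌋) ⌊N⌋).card : ℝ) = 2 * ⌊N⌋ + 1 := by exact_mod_cast hcard
  rw [box, Finset.card_product, Nat.cast_mul, hcardR]
  have := Int.floor_le N
  have : (0 : ℝ) ≤ ⌊N⌋ := by exact_mod_cast hfloor
  nlinarith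

lemma norm_tsum_ite_jb_le_le {E : Type*} [NormedAddCommGroup E] {f : ℤ × ℤ → E} {N B : ℝ}
    (hN : 1 ≤ N) (hf : ∀ n, jb n ≤ N → ‖f n‖ ≤ B) :
    ‖∑' n, if jb n ≤ N then f n else 0‖ ≤ 9 * N ^ 2 * B := by
  have hjb0 : jb 0 ≤ N := by simpa [jb] using hN
  have hB : 0 ≤ B := (norm_nonneg _).trans (hf 0 hjb0)
  rw [tsum_eq_sum fun n hn => if_neg (mt mem_box_floor_of_jb_le hn)]
  refine (norm_sum_le _ _).trans ?_
  refine (Finset.sum_le_card_nsmul _ _ B fun n _ => ?_).trans ?_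
  · split_ifs with hn
    · exact hf n hn
    · simpa using hB
  · rw [nsmul_eq_mul]
    exact mul_le_mul_of_nonneg_right (card_box_floor_le hN) hB

lemma rpow_two_mul_le_of_two_mul_le_rpow {θ ε : ℝ} (hθ₀ : 0 ≤ θ) (hθ₁ : θ < 1) (hε : 0 < ε)
    (h : 2 * ε ≤ ε ^ θ) : ε ^ (2 * θ) ≤ (1 / 2) ^ (2 * θ / (1 - θ)) := by
  have hsplit : ε ^ θ * ε ^ (1 - θ) = ε := by rw [← Real.rpow_add hε]; norm_num
  have hsmall : ε ^ (1 - θ) ≤ 1 / 2 := by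
    nlinarith [Real.rpow_pos_of_pos hε θ, Real.rpow_pos_of_pos hε (1 - θ)]
  calc ε ^ (2 * θ) = (ε ^ (1 - θ)) ^ (2 * θ / (1 - θ)) := by
        rw [← Real.rpow_mul hε.le, mul_div_cancel₀ _ (by linarith : 1 - θ ≠ 0)]
    _ ≤ (1 / 2) ^ (2 * θ / (1 - θ)) :=
        Real.rpow_le_rpow (by positivity) hsmall (div_nonneg (by linarith) (by linarith))

/-- For every `θ ∈ (0,1)` there is `C > 0` such that for all `ε ∈ (0,1]`, `N ≥ 1` with
`2εN ≤ ε^θ`, `t ≥ 0` and `z ∈ ℝ²`, the truncated covariance functions of the damped-wave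
and heat stochastic convolutions differ by at most `C ε^{2θ}`. -/
theorem dampedWave_heat_covariance_convergence (θ : ℝ) (hθ : θ ∈ Set.Ioo (0:ℝ) 1) :
    ∃ C : ℝ, 0 < C ∧ ∀ (ε N t : ℝ) (z : ℝ × ℝ), ε ∈ Set.Ioc (0:ℝ) 1 → 1 ≤ N →
      2 * ε * N ≤ ε ^ θ → 0 ≤ t →
      ‖∑' n : ℤ × ℤ,
        if jb n ≤ N then
          ((((∫ s in (0:ℝ)..t,
              Real.exp (-s / ε ^ 2) * s ^ 2 * (phi (s ^ 2 * lam ε (jb n) ^ 2)) ^ 2) / ε ^ 4)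
            - ∫ s in (0:ℝ)..t, Real.exp (-2 * s * jb n ^ 2) : ℝ) : ℂ) *
            Complex.exp (Complex.I * ((dotZ n z : ℝ) : ℂ))
        else 0‖ ≤ C * ε ^ (2 * θ) := by
  obtain ⟨hθ₀, hθ₁⟩ := hθ
  set K : ℝ := (1 / 2) ^ (2 * θ / (1 - θ))
  have hK : K < 1 :=
    Real.rpow_lt_one (by norm_num) (by norm_num) (div_pos (by linarith) (by linarith))
  refine ⟨27 / (4 * (1 - K)), div_pos (by norm_num) (by linarith), ?_⟩
  rintro ε N t z ⟨hε, -⟩ hN hεN ht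
  have hN2 : 4 * ε ^ 2 * N ^ 2 ≤ ε ^ (2 * θ) := by
    rw [mul_comm 2 θ, Real.rpow_mul hε.le θ 2, Real.rpow_two]
    nlinarith [pow_le_pow_left₀ (by positivity) hεN 2]
  have hεK : ε ^ (2 * θ) ≤ K :=
    rpow_two_mul_le_of_two_mul_le_rpow hθ₀.le hθ₁ hε (by nlinarith)
  refine (norm_tsum_ite_jb_le_le (B := 3 * ε ^ 2 / (1 - K)) hN fun n hn => ?_).trans ?_
  · have hjb := one_le_jb n
    have hmode : 4 * ε ^ 2 * jb n ^ 2 ≤ K := by nlinarith [pow_le_pow_left₀ (by linarith) hn 2]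
    rw [norm_mul, Complex.norm_exp_I_mul_ofReal, mul_one, Complex.norm_real, Real.norm_eq_abs]
    refine (abs_dampedWave_sub_heat_le hε (by linarith) ht (by linarith)).trans ?_
    gcongr
  · calc 9 * N ^ 2 * (3 * ε ^ 2 / (1 - K)) = 27 / (4 * (1 - K)) * (4 * ε ^ 2 * N ^ 2) := by
          field_simp; norm_num
      _ ≤ 27 / (4 * (1 - K)) * ε ^ (2 * θ) := by gcongr
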